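/- arXiv:2309.11388 — 3 statements merged into one kernel-verified Lean document; each statement's English description precedes it below -/
import Mathlib

section
/- Let f be monotone increasing on [0,ε] with a·x^r ≤ f(x) ≤ b·x^r on [0,ε] (a,b,r > 0, ε ∈ (0,1)), and let k₁ ≥ ... ≥ k_m > 0. Set U_j = k_{j+1}+...+k_m, L_j = k₁+...+k_j, K = L_m, and d_I = (max_{1≤j≤m} (b·k_j − a·U_j)/(b·k_j + a·L_j))^{1/r}. Then for every x ∈ [d_I, ε] and every n ≥ 1, the tail inequality w_n(x) ≤ ∑_{ℓ>n} w_ℓ(x) holds; consequently the achievement set E(w_n(x)) is a compact interval. -/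
open Set Finset

/-- `g m n = 1 + ((n-1) mod m)`: the index of the coefficient used in the `n`-th term. -/
def mgIdx (m n : ℕ) : ℕ := 1 + (n - 1) % m

/-- The `n`-th term (for `n ≥ 1`) of the generalized multigeometric series:
`w_n(x) = k_{g(n)} · f(x^⌊(m+n-1)/m⌋)`. -/
noncomputable def mgTerm (k : ℕ → ℝ) (f : ℝ → ℝ) (m n : ℕ) (x : ℝ) : ℝ :=
  k (mgIdx m n) * f (x ^ ((m + n - 1) / m))

/-- The achievement set (set of all subsums) of the series `∑_{n ≥ 1} z n`. -/
def subsums (z : ℕ → ℝ) : Set ℝ :=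
  {y | ∃ c : ℕ → Bool, HasSum (fun n => if c (n + 1) then z (n + 1) else 0) y}

/-- `K = k₁ + ⋯ + k_m`. -/
noncomputable def Ksum (k : ℕ → ℝ) (m : ℕ) : ℝ := ∑ i ∈ Finset.Icc 1 m, k i

/-- `U_j = k_{j+1} + ⋯ + k_m`. -/
noncomputable def Usum (k : ℕ → ℝ) (m j : ℕ) : ℝ := ∑ i ∈ Finset.Icc (j + 1) m, k i

/-- `L_j = k₁ + ⋯ + k_j`. -/
noncomputable def Lsum (k : ℕ → ℝ) (j : ℕ) : ℝ := ∑ i ∈ Finset.Icc 1 j, k i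

/-! Put `y = x ^ r`. The terms `w_n(x)` lie between `a φ_n` and `b φ_n`, where
`φ_n = k_{g(n)} y^⌊(m+n-1)/m⌋` is the same series with `f = id`. Since `φ_{n+m} = y φ_n`, the tail
of `φ` after `n = t m + i` is `(U_i y^(t+1) + L_i y^(t+2)) / (1 - y)`, while `w_n ≤ b k_i y^(t+1)`;
so the tail inequality reduces to `b k_i - a U_i ≤ y (b k_i + a L_i)`, which is exactly `x ≥ d_I`.
The achievement set is then an interval by Kakeya's theorem, realized by the greedy algorithm. -/

open Filter Topology

theorem hasSum_div_one_sub_of_add_eq_mul {u : ℕ → ℝ} {y : ℝ} {m : ℕ} (hm : 0 < m)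
    (hy0 : 0 ≤ y) (hy1 : y < 1) (hu : ∀ j, u (j + m) = y * u j) :
    HasSum u ((∑ j ∈ range m, u j) / (1 - y)) := by
  have : NeZero m := ⟨hm.ne'⟩
  have hblock : ∀ q i, u (i + m * q) = y ^ q * u i := by
    intro q i
    induction q with
    | zero => simp
    | succ q ih => rw [mul_add_one, ← add_assoc, hu, ih, pow_succ']; ring
  have hgeom : Summable fun q : ℕ => ‖y ^ q‖ := by
    simpa [abs_of_nonneg hy0] using summable_geometric_of_lt_one hy0 hy1
  have hprod : Summable fun p : ℕ × Fin m => y ^ p.1 * u p.2 :=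
    summable_mul_of_summable_norm (f := fun q : ℕ => y ^ q) (g := fun i : Fin m => u i)
      hgeom Summable.of_finite
  have hsummable : Summable u := by
    refine (hprod.comp_injective (Nat.divModEquiv m).injective).congr fun j => ?_
    simp [Nat.divModEquiv, ← hblock, Nat.mod_add_div]
  have hsplit := hsummable.sum_add_tsum_nat_add m
  simp only [hu, tsum_mul_left] at hsplit
  convert hsummable.hasSum using 1
  rw [div_eq_iff (by linarith)]
  linarith

noncomputable def greedySum (v : ℕ → ℝ) (y : ℝ) : ℕ → ℝ
  | 0 => 0
  | n + 1 => if greedySum v y n + v n ≤ y then greedySum v y n + v n else greedySum v y n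

theorem sum_range_ite_eq_greedySum (v : ℕ → ℝ) (y : ℝ) (n : ℕ) :
    ∑ i ∈ range n, (if greedySum v y i + v i ≤ y then v i else 0) = greedySum v y n := by
  induction n with
  | zero => simp [greedySum]
  | succ n ih => rw [sum_range_succ, ih, greedySum]; split_ifs <;> simp

theorem tsum_nat_add_eq_add_tsum {v : ℕ → ℝ} (hs : Summable v) (n : ℕ) :
    ∑' j, v (j + n) = v n + ∑' j, v (n + 1 + j) := by
  rw [((summable_nat_add_iff n).2 hs).tsum_eq_zero_add]
  simp only [zero_add]
  congr 1
  exact tsum_congr fun j => congrArg v (by omega)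

theorem greedySum_le_and_le_add_tsum {v : ℕ → ℝ} (hs : Summable v)
    (ht : ∀ n, v n ≤ ∑' j, v (n + 1 + j)) {y : ℝ} (hy0 : 0 ≤ y) (hyS : y ≤ ∑' n, v n)
    (n : ℕ) :
    greedySum v y n ≤ y ∧ y ≤ greedySum v y n + ∑' j, v (j + n) := by
  induction n with
  | zero => simpa [greedySum] using ⟨hy0, hyS⟩
  | succ n ih =>
    have htail := tsum_nat_add_eq_add_tsum hs n
    have hshift : ∑' j, v (j + (n + 1)) = ∑' j, v (n + 1 + j) :=
      tsum_congr fun j => congrArg v (by omega)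
    rw [greedySum, hshift]
    split_ifs with h
    · exact ⟨h, by linarith⟩
    · exact ⟨ih.1, by linarith [ht n]⟩

/-- Kakeya's theorem. -/
theorem setOf_hasSum_ite_eq_Icc {v : ℕ → ℝ} (h0 : ∀ n, 0 ≤ v n) (hs : Summable v)
    (ht : ∀ n, v n ≤ ∑' j, v (n + 1 + j)) :
    {y | ∃ c : ℕ → Bool, HasSum (fun n => if c n then v n else 0) y} = Icc 0 (∑' n, v n) := by
  ext y
  constructor
  · rintro ⟨c, hc⟩
    have hle : ∀ n, (if c n then v n else 0) ≤ v n := fun n => by split_ifs <;> simp [h0 n]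
    have hge : ∀ n, 0 ≤ (if c n then v n else 0) := fun n => by split_ifs <;> simp [h0 n]
    exact ⟨hasSum_le hge hasSum_zero hc, hasSum_le hle hc hs.hasSum⟩
  · rintro ⟨hy0, hyS⟩
    have hinv := greedySum_le_and_le_add_tsum hs ht hy0 hyS
    have hlim : Tendsto (greedySum v y) atTop (𝓝 y) := by
      refine tendsto_of_tendsto_of_tendsto_of_le_of_le
        (by simpa using (tendsto_sum_nat_add v).const_sub y) tendsto_const_nhds
        (fun n => ?_) (fun n => (hinv n).1)
      linarith [(hinv n).2]
    refine ⟨fun n => decide (greedySum v y n + v n ≤ y), ?_⟩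
    rw [hasSum_iff_tendsto_nat_of_nonneg (fun n => by split_ifs <;> simp [h0 n])]
    simpa only [decide_eq_true_eq, sum_range_ite_eq_greedySum] using hlim

theorem subsums_eq_setOf_hasSum (z : ℕ → ℝ) :
    subsums z = {y | ∃ c : ℕ → Bool, HasSum (fun n => if c n then z (n + 1) else 0) y} := by
  ext y
  constructor
  · rintro ⟨c, hc⟩
    exact ⟨fun n => c (n + 1), hc⟩
  · rintro ⟨c, hc⟩
    exact ⟨fun n => c (n - 1), by simpa using hc⟩

section MultigeometricTerm

variable {k : ℕ → ℝ} {m : ℕ}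

theorem mgIdx_mem_Icc (hm : 0 < m) (n : ℕ) : 1 ≤ mgIdx m n ∧ mgIdx m n ≤ m := by
  have := Nat.mod_lt (n - 1) hm
  unfold mgIdx
  omega

theorem exists_eq_mul_add (hm : 0 < m) {n : ℕ} (hn : 1 ≤ n) :
    ∃ t i, 1 ≤ i ∧ i ≤ m ∧ n = t * m + i :=
  ⟨(n - 1) / m, (n - 1) % m + 1, by omega, by have := Nat.mod_lt (n - 1) hm; omega,
    by have := Nat.div_add_mod' (n - 1) m; omega⟩

theorem mgTerm_mul_add (f : ℝ → ℝ) (x : ℝ) (hm : 0 < m) (t : ℕ) {i : ℕ} (hi : 1 ≤ i)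
    (him : i ≤ m) : mgTerm k f m (t * m + i) x = k i * f (x ^ (t + 1)) := by
  have hidx : mgIdx m (t * m + i) = i := by
    rw [mgIdx, show t * m + i - 1 = i - 1 + t * m by omega, Nat.add_mul_mod_self_right,
      Nat.mod_eq_of_lt (by omega)]
    omega
  have hexp : (m + (t * m + i) - 1) / m = t + 1 := by
    rw [show m + (t * m + i) - 1 = i - 1 + (t + 1) * m by rw [add_one_mul]; omega,
      Nat.add_mul_div_right _ _ hm, Nat.div_eq_of_lt (by omega), zero_add]
  rw [mgTerm, hidx, hexp]

theorem mgTerm_id_add_self (hm : 0 < m) {n : ℕ} (hn : 1 ≤ n) (y : ℝ) :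
    mgTerm k id m (n + m) y = y * mgTerm k id m n y := by
  obtain ⟨t, i, hi, him, rfl⟩ := exists_eq_mul_add hm hn
  rw [show t * m + i + m = (t + 1) * m + i by ring, mgTerm_mul_add _ _ hm _ hi him,
    mgTerm_mul_add _ _ hm _ hi him]
  simp only [id, pow_succ]
  ring

theorem Usum_eq_sum_range (k : ℕ → ℝ) (m i : ℕ) :
    Usum k m i = ∑ j ∈ range (m - i), k (i + 1 + j) := by
  rw [Usum, ← Finset.Ico_add_one_right_eq_Icc, Finset.sum_Ico_eq_sum_range,
    show m + 1 - (i + 1) = m - i by omega]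

/-- The `m` terms after position `t m + i` are the last `m - i` terms of block `t` and the first
`i` terms of block `t + 1`. -/
theorem sum_range_mgTerm_id (hm : 0 < m) (y : ℝ) (t : ℕ) {i : ℕ} (him : i ≤ m) :
    ∑ j ∈ range m, mgTerm k id m (t * m + i + 1 + j) y
      = Usum k m i * y ^ (t + 1) + Lsum k i * y ^ (t + 2) := by
  have hL : Lsum k i = Usum k i 0 := rfl
  rw [hL, Usum_eq_sum_range, Usum_eq_sum_range, ← Nat.sub_add_cancel him, sum_range_add,
    Nat.sub_add_cancel him, sum_mul, sum_mul]
  congr 1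
  · refine sum_congr rfl fun j hj => ?_
    rw [Finset.mem_range] at hj
    rw [show t * m + i + 1 + j = t * m + (i + 1 + j) by ring,
      mgTerm_mul_add _ _ hm _ (by omega) (by omega), id]
  · refine sum_congr rfl fun j hj => ?_
    rw [Finset.mem_range] at hj
    rw [show t * m + i + 1 + (m - i + j) = (t + 1) * m + (0 + 1 + j) by
        rw [add_one_mul]; omega,
      mgTerm_mul_add _ _ hm _ (by omega) (by omega), id]

theorem hasSum_mgTerm_id_tail (hm : 0 < m) {y : ℝ} (hy0 : 0 ≤ y) (hy1 : y < 1) (t : ℕ)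
    {i : ℕ} (him : i ≤ m) :
    HasSum (fun j => mgTerm k id m (t * m + i + 1 + j) y)
      ((Usum k m i * y ^ (t + 1) + Lsum k i * y ^ (t + 2)) / (1 - y)) := by
  rw [← sum_range_mgTerm_id hm y t him]
  refine hasSum_div_one_sub_of_add_eq_mul hm hy0 hy1 fun j => ?_
  rw [show t * m + i + 1 + (j + m) = t * m + i + 1 + j + m by ring]
  exact mgTerm_id_add_self hm (by omega) y

theorem mgTerm_id_nonneg (hm : 0 < m) (hk : ∀ i, 1 ≤ i → i ≤ m → 0 ≤ k i) {y : ℝ}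
    (hy0 : 0 ≤ y) (n : ℕ) : 0 ≤ mgTerm k id m n y :=
  mul_nonneg (hk _ (mgIdx_mem_Icc hm n).1 (mgIdx_mem_Icc hm n).2) (pow_nonneg hy0 _)

theorem mgTerm_bounds {f : ℝ → ℝ} {a b r ε x : ℝ}
    (hf : ∀ s ∈ Icc (0 : ℝ) ε, a * s ^ r ≤ f s ∧ f s ≤ b * s ^ r) (hx : x ∈ Icc 0 ε)
    (hx1 : x ≤ 1) (hm : 0 < m) (hk : ∀ i, 1 ≤ i → i ≤ m → 0 ≤ k i) {n : ℕ} (hn : 1 ≤ n) :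
    a * mgTerm k id m n (x ^ r) ≤ mgTerm k f m n x ∧
      mgTerm k f m n x ≤ b * mgTerm k id m n (x ^ r) := by
  have hp : 1 ≤ (m + n - 1) / m := (Nat.le_div_iff_mul_le hm).2 (by omega)
  have hpow : x ^ ((m + n - 1) / m) ∈ Icc 0 ε :=
    ⟨pow_nonneg hx.1 _, (pow_le_of_le_one hx.1 hx1 (by omega)).trans hx.2⟩
  have hkn := hk _ (mgIdx_mem_Icc hm n).1 (mgIdx_mem_Icc hm n).2
  have hfx := hf _ hpow
  rw [← Real.rpow_pow_comm hx.1] at hfx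
  simp only [mgTerm, id]
  constructor
  · nlinarith [mul_le_mul_of_nonneg_left hfx.1 hkn]
  · nlinarith [mul_le_mul_of_nonneg_left hfx.2 hkn]

section Sandwich

variable {w : ℕ → ℝ} {a b y : ℝ}

theorem nonneg_of_mgTerm_id_bounds (hm : 0 < m) (hy0 : 0 ≤ y)
    (hk : ∀ i, 1 ≤ i → i ≤ m → 0 ≤ k i) (ha : 0 ≤ a)
    (hw : ∀ n, 1 ≤ n → a * mgTerm k id m n y ≤ w n ∧ w n ≤ b * mgTerm k id m n y) {n : ℕ}
    (hn : 1 ≤ n) : 0 ≤ w n :=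
  (mul_nonneg ha (mgTerm_id_nonneg hm hk hy0 n)).trans (hw n hn).1

theorem summable_of_mgTerm_id_bounds (hm : 0 < m) (hy0 : 0 ≤ y) (hy1 : y < 1)
    (hk : ∀ i, 1 ≤ i → i ≤ m → 0 ≤ k i) (ha : 0 ≤ a)
    (hw : ∀ n, 1 ≤ n → a * mgTerm k id m n y ≤ w n ∧ w n ≤ b * mgTerm k id m n y) (n : ℕ) :
    Summable fun j => w (n + 1 + j) := by
  have hT := hasSum_mgTerm_id_tail (k := k) hm hy0 hy1 (n / m) (Nat.mod_lt n hm).le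
  rw [Nat.div_add_mod'] at hT
  exact .of_nonneg_of_le (fun j => nonneg_of_mgTerm_id_bounds hm hy0 hk ha hw (by omega))
    (fun j => (hw _ (by omega)).2) (hT.summable.mul_left b)

theorem le_tsum_of_mgTerm_id_bounds (hm : 0 < m) (hy0 : 0 ≤ y) (hy1 : y < 1)
    (hk : ∀ i, 1 ≤ i → i ≤ m → 0 ≤ k i) (ha : 0 ≤ a)
    (hw : ∀ n, 1 ≤ n → a * mgTerm k id m n y ≤ w n ∧ w n ≤ b * mgTerm k id m n y)
    (hcond : ∀ i, 1 ≤ i → i ≤ m → b * k i - a * Usum k m i ≤ y * (b * k i + a * Lsum k i))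
    {n : ℕ} (hn : 1 ≤ n) : w n ≤ ∑' j, w (n + 1 + j) := by
  obtain ⟨t, i, hi, him, rfl⟩ := exists_eq_mul_add hm hn
  have hT := hasSum_mgTerm_id_tail (k := k) hm hy0 hy1 t him
  have hpow : 0 ≤ y ^ (t + 1) := pow_nonneg hy0 _
  calc w (t * m + i) ≤ b * (k i * y ^ (t + 1)) := by
        simpa [mgTerm_mul_add _ _ hm t hi him] using (hw _ hn).2
    _ ≤ a * ((Usum k m i * y ^ (t + 1) + Lsum k i * y ^ (t + 2)) / (1 - y)) := by
        rw [mul_div_assoc', le_div_iff₀ (by linarith), pow_succ y (t + 1)]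
        nlinarith [mul_le_mul_of_nonneg_right (hcond i hi him) hpow]
    _ ≤ ∑' j, w (t * m + i + 1 + j) :=
        hasSum_le (fun j => (hw _ (by omega)).1) (hT.mul_left a)
          (summable_of_mgTerm_id_bounds hm hy0 hy1 hk ha hw _).hasSum

end Sandwich

end MultigeometricTerm

theorem nonneg_and_le_rpow_mul_of_sup'_rpow_le {k : ℕ → ℝ} {m : ℕ} {a b r x : ℝ}
    (ha : 0 < a) (hb : 0 < b) (hr : 0 < r) (hm : 1 ≤ m) (hk : ∀ i, 1 ≤ i → i ≤ m → 0 < k i)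
    (hx : ((Finset.Icc 1 m).sup' (Finset.nonempty_Icc.mpr hm)
        (fun j => (b * k j - a * Usum k m j) / (b * k j + a * Lsum k j))) ^ (1 / r) ≤ x) :
    0 ≤ x ∧
      ∀ i, 1 ≤ i → i ≤ m → b * k i - a * Usum k m i ≤ x ^ r * (b * k i + a * Lsum k i) := by
  have hden : ∀ i, 1 ≤ i → i ≤ m → 0 < b * k i + a * Lsum k i := fun i hi him =>
    add_pos_of_pos_of_nonneg (mul_pos hb (hk i hi him)) (mul_nonneg ha.le
      (sum_nonneg fun j hj => (hk j (mem_Icc.1 hj).1 ((mem_Icc.1 hj).2.trans him)).le))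
  have hM0 := (le_sup' (fun j => (b * k j - a * Usum k m j) / (b * k j + a * Lsum k j))
    (mem_Icc.2 ⟨hm, le_rfl⟩)).trans'
      (div_nonneg (by simp [Usum, (mul_pos hb (hk m hm le_rfl)).le]) (hden m hm le_rfl).le)
  have hx0 : 0 ≤ x := (Real.rpow_nonneg hM0 _).trans hx
  rw [one_div, Real.rpow_inv_le_iff_of_pos hM0 hx0 hr] at hx
  exact ⟨hx0, fun i hi him => (div_le_iff₀ (hden i hi him)).1
    ((sup'_le_iff _ _).1 hx i (mem_Icc.2 ⟨hi, him⟩))⟩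

theorem stmt_10_general (f : ℝ → ℝ) (a b r ε : ℝ) (ha : 0 < a) (hb : 0 < b) (hr : 0 < r)
    (hε1 : ε < 1)
    (hf : ∀ x ∈ Set.Icc (0:ℝ) ε, a * x ^ r ≤ f x ∧ f x ≤ b * x ^ r)
    (m : ℕ) (hm : 1 ≤ m) (k : ℕ → ℝ)
    (hkmono : ∀ i j, 1 ≤ i → i ≤ j → j ≤ m → k j ≤ k i)
    (hkpos : 0 < k m)
    (dI : ℝ)
    (hdI : dI = ((Finset.Icc 1 m).sup' (Finset.nonempty_Icc.mpr hm)
        (fun j => (b * k j - a * Usum k m j) / (b * k j + a * Lsum k j))) ^ (1 / r)) :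
    ∀ x ∈ Set.Icc dI ε,
      (∀ n : ℕ, 1 ≤ n → mgTerm k f m n x ≤ ∑' j : ℕ, mgTerm k f m (n + 1 + j) x) ∧
      ∃ p q : ℝ, p ≤ q ∧ subsums (fun n => mgTerm k f m n x) = Set.Icc p q := by
  have hk : ∀ i, 1 ≤ i → i ≤ m → 0 < k i := fun i hi him =>
    hkpos.trans_le (hkmono i m hi him le_rfl)
  have hk' : ∀ i, 1 ≤ i → i ≤ m → 0 ≤ k i := fun i hi him => (hk i hi him).le
  rintro x ⟨hdx, hxε⟩
  obtain ⟨hx0, hcond⟩ := nonneg_and_le_rpow_mul_of_sup'_rpow_le ha hb hr hm hk (hdI ▸ hdx)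
  have hy0 : 0 ≤ x ^ r := Real.rpow_nonneg hx0 r
  have hy1 : x ^ r < 1 := Real.rpow_lt_one hx0 (hxε.trans_lt hε1) hr
  have hw := fun n (hn : 1 ≤ n) => mgTerm_bounds hf ⟨hx0, hxε⟩ (hxε.trans hε1.le) hm hk' hn
  have hnonneg := fun n (hn : 1 ≤ n) => nonneg_of_mgTerm_id_bounds hm hy0 hk' ha.le hw hn
  have htail := fun n (hn : 1 ≤ n) =>
    le_tsum_of_mgTerm_id_bounds hm hy0 hy1 hk' ha.le hw hcond hn
  refine ⟨htail, 0, ∑' n, mgTerm k f m (n + 1) x,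
    tsum_nonneg fun n => hnonneg _ (by omega), ?_⟩
  rw [subsums_eq_setOf_hasSum, setOf_hasSum_ite_eq_Icc (fun n => hnonneg _ (by omega))
    (by simpa [add_comm] using summable_of_mgTerm_id_bounds hm hy0 hy1 hk' ha.le hw 0)
    fun n => (htail (n + 1) (by omega)).trans_eq (tsum_congr fun j => by rw [add_right_comm])]

/-- On `[d_I, ε]` every term of the generalized multigeometric series is at most its tail,
and hence the achievement set is a compact interval. -/
theorem stmt_10 (f : ℝ → ℝ) (a b r ε : ℝ) (ha : 0 < a) (hb : 0 < b) (hr : 0 < r)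
    (hε : 0 < ε) (hε1 : ε < 1)
    (hmono : MonotoneOn f (Set.Icc 0 ε))
    (hf : ∀ x ∈ Set.Icc (0:ℝ) ε, a * x ^ r ≤ f x ∧ f x ≤ b * x ^ r)
    (m : ℕ) (hm : 1 ≤ m) (k : ℕ → ℝ)
    (hkmono : ∀ i j, 1 ≤ i → i ≤ j → j ≤ m → k j ≤ k i)
    (hkpos : 0 < k m)
    (dI : ℝ)
    (hdI : dI = ((Finset.Icc 1 m).sup' (Finset.nonempty_Icc.mpr hm)
        (fun j => (b * k j - a * Usum k m j) / (b * k j + a * Lsum k j))) ^ (1 / r))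
    (hdIε : dI ≤ ε) :
    ∀ x ∈ Set.Icc dI ε,
      (∀ n : ℕ, 1 ≤ n → mgTerm k f m n x ≤ ∑' j : ℕ, mgTerm k f m (n + 1 + j) x) ∧
      ∃ p q : ℝ, p ≤ q ∧ subsums (fun n => mgTerm k f m n x) = Set.Icc p q :=
  stmt_10_general f a b r ε ha hb hr hε1 hf m hm k hkmono hkpos dI hdI
end

section
/- For 0 < x < ε and ℓ ≥ 1, the tail satisfies ∑_{j > ℓm} w_j(x) ≤ b·K·x^{(ℓ+1)r}/(1 − x^r), while w_{ℓm}(x) ≥ a·k_m·x^{ℓr}; hence if x^r < a·k_m/(b·K + a·k_m) then w_{ℓm}(x) > ∑_{j>ℓm} w_j(x). -/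
open Set Finset

/-!
With `y = xʳ`, the tail index `ℓm + 1 + j` is `(ℓ + ⌊j/m⌋)m + (j mod m) + 1`, so its term is
`k_{(j mod m)+1} · f(x^{ℓ+1+⌊j/m⌋}) ≤ b·y^{ℓ+1} · k_{(j mod m)+1} · y^{⌊j/m⌋}`; summing this majorant
block by block gives `b·K·y^{ℓ+1}/(1 - y)`. The head term is `k_m · f(x^ℓ) ≥ a·k_m·y^ℓ`, and the
condition `y < a·k_m/(b·K + a·k_m)` says exactly that `b·K·y/(1 - y) < a·k_m`.
-/

theorem hasSum_mul_pow_div_of_mod {𝕜 : Type*} [NormedField 𝕜] [CompleteSpace 𝕜]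
    (m : ℕ) [NeZero m] (c : ℕ → 𝕜) {y : 𝕜} (hy : ‖y‖ < 1) :
    HasSum (fun j => c (j % m) * y ^ (j / m)) ((∑ i ∈ range m, c i) / (1 - y)) := by
  have hsummable : Summable fun p : ℕ × Fin m => y ^ p.1 * c p.2 :=
    summable_mul_of_summable_norm (f := (y ^ ·)) (g := fun s : Fin m => c s)
      (summable_norm_geometric_of_norm_lt_one hy) Summable.of_finite
  have hprod := HasSum.mul (f := (y ^ ·)) (g := fun s : Fin m => c s)
    (hasSum_geometric_of_norm_lt_one hy) (hasSum_fintype _) hsummable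
  have hreindex : (fun j => c (j % m) * y ^ (j / m)) =
      (fun p : ℕ × Fin m => y ^ p.1 * c p.2) ∘ Nat.divModEquiv m := by
    funext j
    simp [mul_comm]
  rw [hreindex, (Nat.divModEquiv m).hasSum_iff, ← Fin.sum_univ_eq_sum_range, div_eq_inv_mul]
  exact hprod

theorem mgTerm_mul_add_add_one (k : ℕ → ℝ) (f : ℝ → ℝ) {m s : ℕ} (hs : s < m) (q : ℕ)
    (x : ℝ) : mgTerm k f m (q * m + s + 1) x = k (s + 1) * f (x ^ (q + 1)) := by
  have hidx : mgIdx m (q * m + s + 1) = s + 1 := by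
    simp [mgIdx, Nat.mod_eq_of_lt hs, add_comm]
  have hexp : (m + (q * m + s + 1) - 1) / m = q + 1 := by
    rw [show m + (q * m + s + 1) - 1 = (q + 1) * m + s by rw [add_mul]; omega,
      add_comm, Nat.add_mul_div_right _ _ (by omega), Nat.div_eq_of_lt hs, zero_add]
  rw [mgTerm, hidx, hexp]

theorem Ksum_eq_sum_range (k : ℕ → ℝ) (m : ℕ) : Ksum k m = ∑ i ∈ range m, k (i + 1) := by
  rw [Ksum, ← Finset.Ico_add_one_right_eq_Icc, Finset.sum_Ico_eq_sum_range]
  simp [add_comm]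

theorem pow_mem_Icc_of_le_one {x ε : ℝ} (hx0 : 0 ≤ x) (hxε : x ≤ ε) (hx1 : x ≤ 1) {n : ℕ}
    (hn : n ≠ 0) : x ^ n ∈ Icc 0 ε :=
  ⟨pow_nonneg hx0 n, (pow_le_of_le_one hx0 hx1 hn).trans hxε⟩

section PowerBounds

variable {f : ℝ → ℝ} {c r ε x : ℝ} {n : ℕ}

theorem le_apply_pow (hf : ∀ t ∈ Icc 0 ε, c * t ^ r ≤ f t) (hx0 : 0 ≤ x) (hxε : x ≤ ε)
    (hx1 : x ≤ 1) (hn : n ≠ 0) : c * (x ^ r) ^ n ≤ f (x ^ n) := by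
  rw [Real.rpow_pow_comm hx0]
  exact hf _ (pow_mem_Icc_of_le_one hx0 hxε hx1 hn)

theorem apply_pow_le (hf : ∀ t ∈ Icc 0 ε, f t ≤ c * t ^ r) (hx0 : 0 ≤ x) (hxε : x ≤ ε)
    (hx1 : x ≤ 1) (hn : n ≠ 0) : f (x ^ n) ≤ c * (x ^ r) ^ n := by
  rw [Real.rpow_pow_comm hx0]
  exact hf _ (pow_mem_Icc_of_le_one hx0 hxε hx1 hn)

end PowerBounds

theorem tsum_mgTerm_tail_le {k : ℕ → ℝ} {f : ℝ → ℝ} {a b r ε x : ℝ} {m : ℕ} (hm : 0 < m)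
    (hk : ∀ i, 1 ≤ i → i ≤ m → 0 ≤ k i) (ha : 0 ≤ a)
    (hf : ∀ t ∈ Icc 0 ε, a * t ^ r ≤ f t ∧ f t ≤ b * t ^ r) (hr : 0 < r)
    (hx0 : 0 ≤ x) (hxε : x ≤ ε) (hx1 : x < 1) (ℓ : ℕ) :
    ∑' j, mgTerm k f m (ℓ * m + 1 + j) x ≤ b * Ksum k m * (x ^ r) ^ (ℓ + 1) / (1 - x ^ r) := by
  have : NeZero m := ⟨hm.ne'⟩
  set y := x ^ r
  have hy0 : 0 ≤ y := Real.rpow_nonneg hx0 r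
  have hy1 : y < 1 := Real.rpow_lt_one hx0 hx1 hr
  have hterm (j : ℕ) :
      mgTerm k f m (ℓ * m + 1 + j) x = k (j % m + 1) * f (x ^ (ℓ + j / m + 1)) := by
    rw [← mgTerm_mul_add_add_one k f (Nat.mod_lt j hm)]
    congr 1
    conv_lhs => rw [← Nat.div_add_mod j m]
    ring
  have hkj (j : ℕ) : 0 ≤ k (j % m + 1) := hk _ (by omega) (Nat.mod_lt j hm)
  have hmajorant : HasSum (fun j => b * y ^ (ℓ + 1) * (k (j % m + 1) * y ^ (j / m)))
      (b * y ^ (ℓ + 1) * (Ksum k m / (1 - y))) := by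
    rw [Ksum_eq_sum_range]
    exact (hasSum_mul_pow_div_of_mod m (fun i => k (i + 1))
      (by rwa [Real.norm_of_nonneg hy0])).mul_left _
  have hle (j : ℕ) : mgTerm k f m (ℓ * m + 1 + j) x ≤
      b * y ^ (ℓ + 1) * (k (j % m + 1) * y ^ (j / m)) := by
    rw [hterm]
    calc k (j % m + 1) * f (x ^ (ℓ + j / m + 1))
        ≤ k (j % m + 1) * (b * y ^ (ℓ + j / m + 1)) :=
          mul_le_mul_of_nonneg_left
            (apply_pow_le (fun t ht => (hf t ht).2) hx0 hxε hx1.le (Nat.succ_ne_zero _)) (hkj j)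
      _ = b * y ^ (ℓ + 1) * (k (j % m + 1) * y ^ (j / m)) := by ring
  have hnonneg (j : ℕ) : 0 ≤ mgTerm k f m (ℓ * m + 1 + j) x := by
    rw [hterm]
    exact mul_nonneg (hkj j) ((mul_nonneg ha (pow_nonneg hy0 _)).trans
      (le_apply_pow (fun t ht => (hf t ht).1) hx0 hxε hx1.le (Nat.succ_ne_zero _)))
  calc ∑' j, mgTerm k f m (ℓ * m + 1 + j) x
      ≤ b * y ^ (ℓ + 1) * (Ksum k m / (1 - y)) :=
        hasSum_le hle (Summable.of_nonneg_of_le hnonneg hle hmajorant.summable).hasSum hmajorant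
    _ = b * Ksum k m * y ^ (ℓ + 1) / (1 - y) := by ring

theorem le_mgTerm_mul_self {k : ℕ → ℝ} {f : ℝ → ℝ} {a r ε x : ℝ} {m ℓ : ℕ} (hm : 0 < m)
    (hℓ : 0 < ℓ) (hkm : 0 ≤ k m) (hf : ∀ t ∈ Icc 0 ε, a * t ^ r ≤ f t) (hx0 : 0 ≤ x)
    (hxε : x ≤ ε) (hx1 : x ≤ 1) : a * k m * (x ^ r) ^ ℓ ≤ mgTerm k f m (ℓ * m) x := by
  obtain ⟨q, rfl⟩ : ∃ q, ℓ = q + 1 := ⟨ℓ - 1, by omega⟩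
  rw [show (q + 1) * m = q * m + (m - 1) + 1 by rw [add_mul]; omega,
    mgTerm_mul_add_add_one k f (by omega : m - 1 < m), Nat.sub_add_cancel hm]
  calc a * k m * (x ^ r) ^ (q + 1) = k m * (a * (x ^ r) ^ (q + 1)) := by ring
    _ ≤ k m * f (x ^ (q + 1)) :=
        mul_le_mul_of_nonneg_left (le_apply_pow hf hx0 hxε hx1 (Nat.succ_ne_zero q)) hkm

theorem mul_pow_succ_div_one_sub_lt {A B y : ℝ} (hA : 0 < A) (hB : 0 ≤ B) (hy0 : 0 < y)
    (hy : y < A / (B + A)) (n : ℕ) : B * y ^ (n + 1) / (1 - y) < A * y ^ n := by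
  have hyBA : y * (B + A) < A := (lt_div_iff₀ (by positivity)).1 hy
  have hy1 : 0 < 1 - y := by nlinarith
  rw [div_lt_iff₀ hy1]
  calc B * y ^ (n + 1) = B * y * y ^ n := by ring
    _ < A * (1 - y) * y ^ n := mul_lt_mul_of_pos_right (by linarith) (pow_pos hy0 n)
    _ = A * y ^ n * (1 - y) := by ring

theorem stmt_14_general (f : ℝ → ℝ) (a b r ε : ℝ) (ha : 0 < a) (hb : 0 < b) (hr : 0 < r)
    (hε1 : ε < 1)
    (hf : ∀ x ∈ Set.Icc (0:ℝ) ε, a * x ^ r ≤ f x ∧ f x ≤ b * x ^ r)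
    (m : ℕ) (hm : 1 ≤ m) (k : ℕ → ℝ)
    (hkmono : ∀ i j, 1 ≤ i → i ≤ j → j ≤ m → k j ≤ k i)
    (hkpos : 0 < k m) :
    ∀ x : ℝ, 0 < x → x < ε → ∀ ℓ : ℕ, 1 ≤ ℓ →
      (∑' j : ℕ, mgTerm k f m (ℓ * m + 1 + j) x) ≤
        b * Ksum k m * x ^ (((ℓ : ℝ) + 1) * r) / (1 - x ^ r) ∧
      a * k m * x ^ ((ℓ : ℝ) * r) ≤ mgTerm k f m (ℓ * m) x ∧
      (x ^ r < a * k m / (b * Ksum k m + a * k m) →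
        (∑' j : ℕ, mgTerm k f m (ℓ * m + 1 + j) x) < mgTerm k f m (ℓ * m) x) := by
  intro x hx hxε ℓ hℓ
  have hx1 : x < 1 := hxε.trans hε1
  have hk (i : ℕ) (hi1 : 1 ≤ i) (him : i ≤ m) : 0 ≤ k i :=
    hkpos.le.trans (hkmono i m hi1 him le_rfl)
  have hK : 0 ≤ Ksum k m := Finset.sum_nonneg fun i hi => hk i (mem_Icc.1 hi).1 (mem_Icc.1 hi).2
  rw [mul_comm _ r, mul_comm _ r, ← Nat.cast_add_one, Real.rpow_mul_natCast hx.le,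
    Real.rpow_mul_natCast hx.le]
  have htail := tsum_mgTerm_tail_le hm hk ha.le hf hr hx.le hxε.le hx1 ℓ
  have hhead := le_mgTerm_mul_self hm hℓ hkpos.le (fun t ht => (hf t ht).1) hx.le
    hxε.le hx1.le
  exact ⟨htail, hhead, fun hy => htail.trans_lt ((mul_pow_succ_div_one_sub_lt (by positivity)
    (mul_nonneg hb.le hK) (Real.rpow_pos_of_pos hx r) hy ℓ).trans_le hhead)⟩

/-- Tail estimate: for `0 < x < ε` and `ℓ ≥ 1`, the tail after the `ℓm`-th term is at most
`b·K·x^{(ℓ+1)r}/(1−xʳ)`, while `w_{ℓm}(x) ≥ a·k_m·x^{ℓr}`; hence if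
`xʳ < a·k_m/(b·K + a·k_m)` then `w_{ℓm}(x)` strictly exceeds its tail. -/
theorem stmt_14 (f : ℝ → ℝ) (a b r ε : ℝ) (ha : 0 < a) (hb : 0 < b) (hr : 0 < r)
    (hε : 0 < ε) (hε1 : ε < 1)
    (hmono : MonotoneOn f (Set.Icc 0 ε))
    (hf : ∀ x ∈ Set.Icc (0:ℝ) ε, a * x ^ r ≤ f x ∧ f x ≤ b * x ^ r)
    (m : ℕ) (hm : 1 ≤ m) (k : ℕ → ℝ)
    (hkmono : ∀ i j, 1 ≤ i → i ≤ j → j ≤ m → k j ≤ k i)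
    (hkpos : 0 < k m) :
    ∀ x : ℝ, 0 < x → x < ε → ∀ ℓ : ℕ, 1 ≤ ℓ →
      (∑' j : ℕ, mgTerm k f m (ℓ * m + 1 + j) x) ≤
        b * Ksum k m * x ^ (((ℓ : ℝ) + 1) * r) / (1 - x ^ r) ∧
      a * k m * x ^ ((ℓ : ℝ) * r) ≤ mgTerm k f m (ℓ * m) x ∧
      (x ^ r < a * k m / (b * Ksum k m + a * k m) →
        (∑' j : ℕ, mgTerm k f m (ℓ * m + 1 + j) x) < mgTerm k f m (ℓ * m) x) :=
  stmt_14_general f a b r ε ha hb hr hε1 hf m hm k hkmono hkpos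
end

section
/- Suppose μ, λ > 0 and s ∈ ℕ are such that each of μ, μ+λ, μ+2λ, ..., μ+sλ is a subsum of k₁+...+k_m (i.e., for each 0 ≤ t ≤ s there exist c_i ∈ {0,1} with μ + tλ = ∑ c_i k_i). Set d_{CI} = (b/(s·a + b))^{1/r}. If d_{CI} < ε, then for every x ∈ [d_{CI}, ε) the achievement set E(w_n(x)) contains a nontrivial compact interval. -/
/-!
Put `ρ = x ^ r`. The block values `F q = f (x ^ (q + 1))` satisfy `a ρ ^ (q + 1) ≤ F q ≤ b ρ ^ (q + 1)`,
and `x ≥ d_{CI}` means exactly `b (1 - ρ) ≤ s a ρ`; comparing with geometric series this gives the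
Kakeya-type condition `F q ≤ s ∑_{j > q} F j`. Under it the greedy algorithm writes every point of
`[0, s λ ∑ F]` as `∑ t_q λ F q` with digits `t_q ∈ {0, …, s}`. Translating by `μ ∑ F`, every point of
`[μ ∑ F, (μ + s λ) ∑ F]` is `∑ (μ + t_q λ) F q`, and since `μ + t_q λ` is a subsum of `k₁ + ⋯ + k_m`
it is realised by choosing terms inside the `q`-th block `k₁ F q, …, k_m F q` of the series.
-/

open Set Finset

open Filter Topology

theorem exists_nat_le_sub_mem_Icc {z T y : ℝ} {s : ℕ} (hz : 0 < z) (hzT : z ≤ s * T)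
    (hy : y ∈ Icc 0 (s * (z + T))) : ∃ t ≤ s, y - t * z ∈ Icc 0 (s * T) := by
  obtain ⟨hy0, hy1⟩ := hy
  by_cases hsz : s * z ≤ y
  · exact ⟨s, le_rfl, by constructor <;> linarith⟩
  · have hfloor : (⌊y / z⌋₊ : ℝ) * z ≤ y := (le_div_iff₀ hz).1 (Nat.floor_le (by positivity))
    have hceil : y < (⌊y / z⌋₊ + 1 : ℝ) * z := (div_lt_iff₀ hz).1 (Nat.lt_floor_add_one _)
    refine ⟨⌊y / z⌋₊, ((Nat.floor_lt (by positivity)).2 ((div_lt_iff₀ hz).2 (not_le.1 hsz))).le,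
      ?_, ?_⟩ <;> linarith

theorem exists_hasSum_nat_mul_of_le_mul_tsum_tail {z : ℕ → ℝ} {s : ℕ} (hz : ∀ n, 0 < z n)
    (hsum : Summable z) (htail : ∀ n, z n ≤ s * ∑' j, z (j + (n + 1))) {Y : ℝ}
    (hY : Y ∈ Icc 0 (s * ∑' n, z n)) :
    ∃ t : ℕ → ℕ, (∀ n, t n ≤ s) ∧ HasSum (fun n => (t n : ℝ) * z n) Y := by
  set T : ℕ → ℝ := fun n => ∑' j, z (j + n)
  have hT_succ : ∀ n, T n = z n + T (n + 1) := fun n => by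
    have := (hsum.comp_injective (add_left_injective n)).tsum_eq_zero_add
    simpa only [Function.comp_def, zero_add, add_right_comm _ 1 n, add_assoc] using this
  have hstep : ∀ n (y : ℝ), ∃ t ≤ s,
      y ∈ Icc 0 (s * T n) → y - t * z n ∈ Icc 0 (s * T (n + 1)) := by
    intro n y
    by_cases hy : y ∈ Icc 0 (s * T n)
    · obtain ⟨t, hts, ht⟩ := exists_nat_le_sub_mem_Icc (hz n) (htail n) (hT_succ n ▸ hy)
      exact ⟨t, hts, fun _ => ht⟩
    · exact ⟨0, Nat.zero_le _, fun h => absurd h hy⟩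
  choose digit hdigit_le hdigit using hstep
  let y : ℕ → ℝ := fun n => Nat.rec Y (fun n yn => yn - digit n yn * z n) n
  have hy_mem : ∀ n, y n ∈ Icc 0 (s * T n) := by
    intro n
    induction n with
    | zero => simpa [y, T] using hY
    | succ n ih => exact hdigit n _ ih
  have hpartial : ∀ n, ∑ i ∈ range n, (digit i (y i) : ℝ) * z i = Y - y n := by
    intro n
    induction n with
    | zero => simp [y]
    | succ n ih => rw [sum_range_succ, ih]; simp only [y]; ring
  have hy_lim : Tendsto y atTop (𝓝 0) :=
    squeeze_zero (fun n => (hy_mem n).1) (fun n => (hy_mem n).2)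
      (by simpa using (tendsto_sum_nat_add z).const_mul (s : ℝ))
  refine ⟨fun n => digit n (y n), fun n => hdigit_le n _, ?_⟩
  rw [hasSum_iff_tendsto_nat_of_nonneg (fun n => mul_nonneg (Nat.cast_nonneg _) (hz n).le)]
  simpa [hpartial] using tendsto_const_nhds.sub hy_lim

theorem summable_of_nonneg_of_le_geometric {F : ℕ → ℝ} {b ρ : ℝ} (hF : ∀ n, 0 ≤ F n)
    (hρ0 : 0 ≤ ρ) (hρ1 : ρ < 1) (hup : ∀ n, F n ≤ b * ρ ^ n) : Summable F :=
  .of_nonneg_of_le hF hup ((summable_geometric_of_lt_one hρ0 hρ1).mul_left b)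

theorem le_mul_tsum_tail_of_geometric_bounds {F : ℕ → ℝ} {a b ρ : ℝ} {s : ℕ} (ha : 0 ≤ a)
    (hρ0 : 0 ≤ ρ) (hρ1 : ρ < 1) (hlow : ∀ n, a * ρ ^ n ≤ F n) (hup : ∀ n, F n ≤ b * ρ ^ n)
    (hab : b * (1 - ρ) ≤ s * a * ρ) (n : ℕ) : F n ≤ s * ∑' j, F (j + (n + 1)) := by
  have hFsum : Summable F := summable_of_nonneg_of_le_geometric
    (fun n => (mul_nonneg ha (pow_nonneg hρ0 n)).trans (hlow n)) hρ0 hρ1 hup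
  have hgeo : HasSum (fun j => a * ρ ^ (j + (n + 1))) (a * ρ ^ (n + 1) / (1 - ρ)) := by
    have := (hasSum_geometric_of_lt_one hρ0 hρ1).mul_left (a * ρ ^ (n + 1))
    rw [← div_eq_mul_inv] at this
    exact this.congr_fun fun j => by ring
  have htail : a * ρ ^ (n + 1) / (1 - ρ) ≤ ∑' j, F (j + (n + 1)) :=
    hasSum_le (fun j => hlow _) hgeo (hFsum.comp_injective (add_left_injective _)).hasSum
  calc F n ≤ b * ρ ^ n := hup n
    _ ≤ s * (a * ρ ^ (n + 1) / (1 - ρ)) := by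
      rw [mul_div_assoc', le_div_iff₀ (by linarith)]
      calc b * ρ ^ n * (1 - ρ) = b * (1 - ρ) * ρ ^ n := by ring
        _ ≤ s * a * ρ * ρ ^ n := by gcongr
        _ = s * (a * ρ ^ (n + 1)) := by ring
    _ ≤ s * ∑' j, F (j + (n + 1)) := by gcongr

theorem HasSum.comp_divModEquiv_of_nonneg {m : ℕ} [NeZero m] {g : ℕ × Fin m → ℝ} (hg : 0 ≤ g)
    {y : ℝ} (h : HasSum (fun q => ∑ i, g (q, i)) y) : HasSum (g ∘ Nat.divModEquiv m) y := by
  have hg_sum : Summable g := (summable_prod_of_nonneg hg).2 ⟨fun _ => .of_finite, by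
    simpa only [tsum_fintype] using h.summable⟩
  have hg_y : HasSum g y := (hg_sum.hasSum.prod_fiberwise fun q => hasSum_fintype _).unique h ▸
    hg_sum.hasSum
  exact (Nat.divModEquiv m).hasSum_iff.2 hg_y

theorem mgTerm_succ {m : ℕ} (hm : 0 < m) (k : ℕ → ℝ) (f : ℝ → ℝ) (n : ℕ) (x : ℝ) :
    mgTerm k f m (n + 1) x = k (1 + n % m) * f (x ^ (n / m + 1)) := by
  rw [mgTerm, mgIdx, Nat.add_sub_cancel, show m + (n + 1) - 1 = n + m by omega,
    Nat.add_div_right n hm]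

theorem Fin.sum_univ_one_add_eq_sum_Icc {M : Type*} [AddCommMonoid M] (φ : ℕ → M) (m : ℕ) :
    ∑ i : Fin m, φ (1 + i) = ∑ i ∈ Finset.Icc 1 m, φ i := by
  rw [Fin.sum_univ_eq_sum_range (fun i => φ (1 + i)),
    show Finset.Icc 1 m = Finset.Ico 1 (m + 1) from rfl, sum_Ico_eq_sum_range, Nat.add_sub_cancel]

theorem mem_subsums_mgTerm {k : ℕ → ℝ} {f : ℝ → ℝ} {m : ℕ} (hm : 0 < m) {x y : ℝ}
    (hk : ∀ i ∈ Finset.Icc 1 m, 0 ≤ k i) (hf : ∀ q : ℕ, 0 ≤ f (x ^ (q + 1))) (c : ℕ → ℕ → Bool)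
    (h : HasSum (fun q => (∑ i ∈ Finset.Icc 1 m, if c q i then k i else 0) * f (x ^ (q + 1))) y) :
    y ∈ subsums (fun n => mgTerm k f m n x) := by
  have : NeZero m := ⟨hm.ne'⟩
  let g : ℕ × Fin m → ℝ := fun p =>
    if c p.1 (1 + p.2) then k (1 + p.2) * f (x ^ (p.1 + 1)) else 0
  have hg : 0 ≤ g := fun p => by
    by_cases hc : c p.1 (1 + p.2)
    · simpa [g, hc] using mul_nonneg (hk _ (Finset.mem_Icc.2 ⟨by omega, by omega⟩)) (hf p.1)
    · simp [g, hc]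
  have hfiber : ∀ q,
      ∑ i, g (q, i) = (∑ i ∈ Finset.Icc 1 m, if c q i then k i else 0) * f (x ^ (q + 1)) := by
    intro q
    rw [sum_mul, ← Fin.sum_univ_one_add_eq_sum_Icc (fun i => (if c q i then k i else 0) * _)]
    simp only [g, ite_mul, zero_mul]
  refine ⟨fun n => c ((n - 1) / m) (1 + (n - 1) % m), ?_⟩
  convert HasSum.comp_divModEquiv_of_nonneg hg (h.congr_fun fun q => hfiber q) using 1
  funext n
  simp [g, mgTerm_succ hm, Nat.divModEquiv, Fin.val_natCast]

theorem stmt_15_general (f : ℝ → ℝ) (a b r ε : ℝ) (ha : 0 < a) (hb : 0 < b) (hr : 0 < r)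
    (hε1 : ε < 1)
    (hf : ∀ x ∈ Set.Icc (0:ℝ) ε, a * x ^ r ≤ f x ∧ f x ≤ b * x ^ r)
    (m : ℕ) (hm : 1 ≤ m) (k : ℕ → ℝ)
    (hkmono : ∀ i j, 1 ≤ i → i ≤ j → j ≤ m → k j ≤ k i)
    (hkpos : 0 < k m)
    (μ lam : ℝ) (hlam : 0 < lam) (s : ℕ) (hs : 1 ≤ s)
    (hsubsum : ∀ t : ℕ, t ≤ s → ∃ c : ℕ → Bool,
      μ + t * lam = ∑ i ∈ Finset.Icc 1 m, if c i then k i else 0)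
    (dCI : ℝ) (hdCI : dCI = (b / (s * a + b)) ^ (1 / r)) :
    ∀ x ∈ Set.Ico dCI ε, ∃ p q : ℝ, p < q ∧
      Set.Icc p q ⊆ subsums (fun n => mgTerm k f m n x) := by
  rintro x ⟨hxd, hxε⟩
  have hx0 : 0 < x := (hdCI ▸ by positivity : 0 < dCI).trans_le hxd
  set ρ := x ^ r
  have hρ0 : 0 < ρ := by positivity
  have hρ1 : ρ < 1 := Real.rpow_lt_one hx0.le (hxε.trans hε1) hr
  have hkey : b * ρ * (1 - ρ) ≤ s * (a * ρ) * ρ := by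
    have hρ : b / (s * a + b) ≤ ρ := by
      rwa [hdCI, one_div, Real.rpow_inv_le_iff_of_pos (by positivity) hx0.le hr] at hxd
    rw [div_le_iff₀ (by positivity)] at hρ
    nlinarith
  set F : ℕ → ℝ := fun q => f (x ^ (q + 1))
  have hF : ∀ q, a * ρ * ρ ^ q ≤ F q ∧ F q ≤ b * ρ * ρ ^ q := fun q => by
    have hxq : x ^ (q + 1) ∈ Set.Icc 0 ε :=
      ⟨by positivity, (pow_le_of_le_one hx0.le (hxε.trans hε1).le (by omega)).trans hxε.le⟩
    have hpow : (x ^ (q + 1)) ^ r = ρ * ρ ^ q := by rw [← Real.rpow_pow_comm hx0.le, pow_succ']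
    simpa only [hpow, mul_assoc] using hf _ hxq
  have hF0 : ∀ q, 0 < F q := fun q => (by positivity : 0 < a * ρ * ρ ^ q).trans_le (hF q).1
  have hFsum : Summable F := summable_of_nonneg_of_le_geometric (fun q => (hF0 q).le) hρ0.le hρ1
    fun q => (hF q).2
  have hFtail := le_mul_tsum_tail_of_geometric_bounds (by positivity) hρ0.le hρ1
    (fun q => (hF q).1) (fun q => (hF q).2) hkey
  set S := ∑' q, F q
  have hS : 0 < S := hFsum.tsum_pos (fun q => (hF0 q).le) 0 (hF0 0)
  refine ⟨μ * S, μ * S + s * (lam * S),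
    lt_add_of_pos_right _ (mul_pos (Nat.cast_pos.2 hs) (mul_pos hlam hS)), fun y hy => ?_⟩
  obtain ⟨t, hts, ht⟩ := exists_hasSum_nat_mul_of_le_mul_tsum_tail (z := fun q => lam * F q)
    (fun q => mul_pos hlam (hF0 q)) (hFsum.mul_left lam)
    (fun q => by rw [tsum_mul_left]; nlinarith [hFtail q]) (Y := y - μ * S)
    ⟨by linarith [hy.1], by rw [tsum_mul_left]; linarith [hy.2]⟩
  choose c hc using fun q => hsubsum (t q) (hts q)
  refine mem_subsums_mgTerm hm (fun i hi => hkpos.le.trans ?_) (fun q => (hF0 q).le) c ?_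
  · obtain ⟨hi1, him⟩ := Finset.mem_Icc.1 hi
    exact hkmono i m hi1 him le_rfl
  · have hsum := (hFsum.hasSum.mul_left μ).add ht
    rw [add_sub_cancel] at hsum
    exact hsum.congr_fun fun q => by rw [← hc]; ring

/-- If `μ, μ+λ, …, μ+sλ` are all subsums of `k₁ + ⋯ + k_m` and `d_{CI} = (b/(sa+b))^{1/r} < ε`,
then for every `x ∈ [d_{CI}, ε)` the achievement set contains a nontrivial compact interval. -/
theorem stmt_15 (f : ℝ → ℝ) (a b r ε : ℝ) (ha : 0 < a) (hb : 0 < b) (hr : 0 < r)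
    (hε : 0 < ε) (hε1 : ε < 1)
    (hmono : MonotoneOn f (Set.Icc 0 ε))
    (hf : ∀ x ∈ Set.Icc (0:ℝ) ε, a * x ^ r ≤ f x ∧ f x ≤ b * x ^ r)
    (m : ℕ) (hm : 1 ≤ m) (k : ℕ → ℝ)
    (hkmono : ∀ i j, 1 ≤ i → i ≤ j → j ≤ m → k j ≤ k i)
    (hkpos : 0 < k m)
    (μ lam : ℝ) (hμ : 0 < μ) (hlam : 0 < lam) (s : ℕ) (hs : 1 ≤ s)
    (hsubsum : ∀ t : ℕ, t ≤ s → ∃ c : ℕ → Bool,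
      μ + t * lam = ∑ i ∈ Finset.Icc 1 m, if c i then k i else 0)
    (dCI : ℝ) (hdCI : dCI = (b / (s * a + b)) ^ (1 / r)) (hdCIε : dCI < ε) :
    ∀ x ∈ Set.Ico dCI ε, ∃ p q : ℝ, p < q ∧
      Set.Icc p q ⊆ subsums (fun n => mgTerm k f m n x) :=
  stmt_15_general f a b r ε ha hb hr hε1 hf m hm k hkmono hkpos μ lam hlam s hs hsubsum dCI hdCI
end
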